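/- Let μ, θ, θ̃ be closed Lagrangian subspaces with θ∩μ = θ̃∩μ = {0} and θ, θ̃ almost coinciding. Then det_F{(P(θ)−P(μ))(P(θ̃)−P(μ))^{-1}} = det_F{(P(θ)+P(μ))(P(θ̃)+P(μ))^{-1}}, where P denotes orthogonal projection and both operators inside det_F differ from Id by trace class (indeed finite rank) operators. -/

import Mathlib

open Module RealInnerProductSpace

variable {H : Type*} [NormedAddCommGroup H] [InnerProductSpace ℝ H] [CompleteSpace H]

/-- A closed Lagrangian subspace of the real symplectic Hilbert space `H` with symplectic
form `ω(x,y) = ⟪J x, y⟫`: a closed subspace which equals its own `ω`-annihilator. -/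
def IsLagrangian (J : H →L[ℝ] H) (lam : Submodule ℝ H) : Prop :=
  IsClosed (lam : Set H) ∧ ∀ x : H, x ∈ lam ↔ ∀ y ∈ lam, ⟪J x, y⟫ = 0

/-- The pair `(lam, mu)` is a Fredholm pair of subspaces. -/
def IsFredholmPair (lam mu : Submodule ℝ H) : Prop :=
  FiniteDimensional ℝ ↥(lam ⊓ mu) ∧ IsClosed ((lam ⊔ mu : Submodule ℝ H) : Set H) ∧
    FiniteDimensional ℝ (H ⧸ (lam ⊔ mu))

/-- A bounded real-linear operator is Fredholm. -/
def IsFredholmR (T : H →L[ℝ] H) : Prop :=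
  FiniteDimensional ℝ (LinearMap.ker (T : H →ₗ[ℝ] H)) ∧ IsClosed (LinearMap.range (T : H →ₗ[ℝ] H) : Set H) ∧
    FiniteDimensional ℝ (H ⧸ LinearMap.range (T : H →ₗ[ℝ] H))

/-- The orthogonal projection onto a closed subspace, as an operator `H → H`. -/
noncomputable def projCLM (lam : Submodule ℝ H) [CompleteSpace lam] : H →L[ℝ] H :=
  lam.subtypeL.comp lam.orthogonalProjectionOnto

/-- The conjugation `τ_λ = 2P(λ) − Id` determined by the real structure `λ`. -/
noncomputable def conjOf (lam : Submodule ℝ H) [CompleteSpace lam] : H →L[ℝ] H :=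
  (2 : ℝ) • projCLM lam - 1

/-!
Write `P = P(μ)` and `C(θ) = (P(θ) - P) (P(θ) + P)⁻¹`. Transversality of `θ` and `μ` gives
`P(θ) (P(θ) + P)⁻¹ P = 0`, which says that in block form with respect to `μ ⊕ μᗮ` the operator
`C(θ)` is `[[-1, *], [0, 1]]`; in particular `C(θ)² = 1`. Hence
`(P(θ) - P) (P(θ̃) - P)⁻¹ = (C(θ) C(θ̃)) · C(θ̃) (P(θ) + P) (P(θ̃) + P)⁻¹ C(θ̃)⁻¹`,
where `C(θ) C(θ̃) - 1` squares to zero and, like `P(θ) - P(θ̃)`, has finite rank. So the first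
factor has `det_F = 1`, and the second has the same `det_F` as `(P(θ) + P) (P(θ̃) + P)⁻¹`.
The range of `P(θ) - P(θ̃)` lies in `(θ ⊓ νᗮ) + (θ̃ ⊓ νᗮ)` with `ν = θ ⊓ θ̃`, which is finite
dimensional because `θ` and `θ̃` almost coincide; everything else is algebra in a ring modulo the
two-sided ideal of finite rank operators.
-/

section BlockReflection

variable {R : Type*} [Ring R]

/-- In block form with respect to `p` and `1 - p`, `c = [[-1, *], [0, 1]]`. -/
def IsBlockReflection (p c : R) : Prop :=
  c * p = -p ∧ (1 - p) * c = 1 - p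

variable {p c d : R}

theorem IsBlockReflection.mul_self (hc : IsBlockReflection p c) : c * c = 1 := by
  have hc' : c = p * c + (1 - p) := by rw [← hc.2]; noncomm_ring
  calc c * c = c * (p * c + (1 - p)) := by rw [← hc']
    _ = (c * p) * c + c - c * p := by noncomm_ring
    _ = 1 := by rw [hc.1]; nth_rw 2 [hc']; noncomm_ring

theorem IsBlockReflection.mul_sub_one_mul_self (hc : IsBlockReflection p c)
    (hd : IsBlockReflection p d) : (c * d - 1) * (c * d - 1) = 0 := by
  have hright : (c * d - 1) * p = 0 := by
    rw [sub_mul, mul_assoc, hd.1, mul_neg, hc.1]; noncomm_ring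
  have hleft : (1 - p) * (c * d - 1) = 0 := by
    rw [mul_sub, ← mul_assoc, hc.2, hd.2, mul_one, sub_self]
  calc (c * d - 1) * (c * d - 1) = (c * d - 1) * (p * (c * d - 1) + (1 - p) * (c * d - 1)) := by
        noncomm_ring
    _ = 0 := by rw [hleft, add_zero, ← mul_assoc, hright, zero_mul]

theorem isUnit_of_mul_self_eq_one (hc : c * c = 1) : IsUnit c :=
  ⟨⟨c, c, hc, hc⟩, rfl⟩

theorem ringInverse_eq_self_of_mul_self_eq_one (hc : c * c = 1) : Ring.inverse c = c := by
  simpa [hc] using Ring.inverse_mul_cancel_left c c (isUnit_of_mul_self_eq_one hc)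

variable {t : R}

theorem sub_mul_ringInverse_add (hb : IsUnit (t + p)) :
    (t - p) * Ring.inverse (t + p) = 1 - 2 * p * Ring.inverse (t + p) := by
  rw [show t - p = t + p - 2 * p by noncomm_ring, sub_mul, Ring.mul_inverse_cancel _ hb]

theorem isBlockReflection_sub_mul_ringInverse_add (hp : IsIdempotentElem p)
    (hb : IsUnit (t + p)) (htp : t * Ring.inverse (t + p) * p = 0) :
    IsBlockReflection p ((t - p) * Ring.inverse (t + p)) := by
  have hpbp : p * Ring.inverse (t + p) * p = p := by
    calc p * Ring.inverse (t + p) * p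
        = (t + p) * Ring.inverse (t + p) * p - t * Ring.inverse (t + p) * p := by noncomm_ring
      _ = p := by rw [htp, Ring.mul_inverse_cancel _ hb, one_mul, sub_zero]
  rw [sub_mul_ringInverse_add hb]
  constructor
  · calc (1 - 2 * p * Ring.inverse (t + p)) * p = p - 2 * (p * Ring.inverse (t + p) * p) := by
          noncomm_ring
      _ = -p := by rw [hpbp]; noncomm_ring
  · calc (1 - p) * (1 - 2 * p * Ring.inverse (t + p))
        = (1 - p) - 2 * ((1 - p) * p) * Ring.inverse (t + p) := by noncomm_ring
      _ = 1 - p := by rw [hp.one_sub_mul_self, mul_zero, zero_mul, sub_zero]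

theorem isUnit_sub_of_isUnit_add (hp : IsIdempotentElem p) (hb : IsUnit (t + p))
    (htp : t * Ring.inverse (t + p) * p = 0) : IsUnit (t - p) := by
  rw [← Ring.inverse_mul_cancel_right (t + p) (t - p) hb]
  exact (isUnit_of_mul_self_eq_one
    (isBlockReflection_sub_mul_ringInverse_add hp hb htp).mul_self).mul hb

end BlockReflection

namespace TwoSidedIdeal

variable {R : Type*} [Ring R] (I : TwoSidedIdeal R) {b b' : R}

theorem mul_ringInverse_sub_one_mem (hb' : IsUnit b') (h : b - b' ∈ I) :
    b * Ring.inverse b' - 1 ∈ I := by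
  rw [← Ring.mul_inverse_cancel _ hb', ← sub_mul]
  exact I.mul_mem_right _ _ h

theorem ringInverse_sub_ringInverse_mem (hb : IsUnit b) (hb' : IsUnit b') (h : b - b' ∈ I) :
    Ring.inverse b - Ring.inverse b' ∈ I := by
  have e : Ring.inverse b - Ring.inverse b' = Ring.inverse b * (-(b - b')) * Ring.inverse b' := by
    rw [neg_sub, mul_sub, sub_mul, Ring.inverse_mul_cancel _ hb,
      Ring.mul_inverse_cancel_right _ _ hb', one_mul]
  rw [e]
  exact I.mul_mem_right _ _ (I.mul_mem_left _ _ (I.neg_mem h))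

theorem sub_mul_ringInverse_add_sub_mem {p t t' : R} (hb : IsUnit (t + p)) (hb' : IsUnit (t' + p))
    (h : t - t' ∈ I) :
    (t - p) * Ring.inverse (t + p) - (t' - p) * Ring.inverse (t' + p) ∈ I := by
  rw [sub_mul_ringInverse_add hb, sub_mul_ringInverse_add hb',
    show ∀ x y : R, 1 - 2 * p * x - (1 - 2 * p * y) = 2 * p * -(x - y) by intros; noncomm_ring]
  refine I.mul_mem_left _ _ (I.neg_mem (I.ringInverse_sub_ringInverse_mem hb hb' ?_))
  rwa [add_sub_add_right_eq_sub]

end TwoSidedIdeal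

section TransitionOperators

variable {R M : Type*} [Ring R] [Monoid M] (I : TwoSidedIdeal R) {p t t' : R}

theorem mul_mul_ringInverse_mul_of_mul_self_eq_one {b b' c c' : R} (hc' : c' * c' = 1)
    (hb' : IsUnit b') :
    c * b * Ring.inverse (c' * b') = (c * c') * (c' * (b * Ring.inverse b') * c') := by
  rw [Ring.inverse_mul (Or.inr hb'), ringInverse_eq_self_of_mul_self_eq_one hc']
  calc c * b * (Ring.inverse b' * c') = c * (c' * c') * (b * Ring.inverse b') * c' := by
        rw [hc']; noncomm_ring
    _ = _ := by noncomm_ring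

theorem detF_sub_mul_ringInverse_eq_detF_add_mul_ringInverse (detF : R → M)
    (hmul : ∀ k ∈ I, ∀ k' ∈ I, detF ((1 + k) * (1 + k')) = detF (1 + k) * detF (1 + k'))
    (hconj : ∀ k ∈ I, ∀ s, IsUnit s → detF (s * (1 + k) * Ring.inverse s) = detF (1 + k))
    (hnil : ∀ k ∈ I, k * k = 0 → detF (1 + k) = 1)
    (hp : IsIdempotentElem p) (hb : IsUnit (t + p)) (hb' : IsUnit (t' + p))
    (htp : t * Ring.inverse (t + p) * p = 0) (ht'p : t' * Ring.inverse (t' + p) * p = 0)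
    (htt' : t - t' ∈ I) :
    detF ((t - p) * Ring.inverse (t' - p)) = detF ((t + p) * Ring.inverse (t' + p)) := by
  set c := (t - p) * Ring.inverse (t + p)
  set c' := (t' - p) * Ring.inverse (t' + p)
  have hc := isBlockReflection_sub_mul_ringInverse_add hp hb htp
  have hc' := isBlockReflection_sub_mul_ringInverse_add hp hb' ht'p
  have hc'c' : c' * c' = 1 := hc'.mul_self
  have ha : t - p = c * (t + p) := (Ring.inverse_mul_cancel_right _ _ hb).symm
  have ha' : t' - p = c' * (t' + p) := (Ring.inverse_mul_cancel_right _ _ hb').symm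
  have hk : c * c' - 1 ∈ I := by
    rw [← hc'c', ← sub_mul]
    exact I.mul_mem_right _ _ (I.sub_mul_ringInverse_add_sub_mem hb hb' htt')
  set m := (t + p) * Ring.inverse (t' + p)
  have hm : m - 1 ∈ I := I.mul_ringInverse_sub_one_mem hb' (by rwa [add_sub_add_right_eq_sub])
  have hm' : c' * (m - 1) * c' ∈ I := I.mul_mem_right _ _ (I.mul_mem_left _ _ hm)
  have hfactor :
      (t - p) * Ring.inverse (t' - p) = (1 + (c * c' - 1)) * (1 + c' * (m - 1) * c') := by
    rw [ha, ha', mul_mul_ringInverse_mul_of_mul_self_eq_one hc'c' hb', add_sub_cancel, mul_sub,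
      sub_mul, mul_one, hc'c', add_sub_cancel]
  calc detF ((t - p) * Ring.inverse (t' - p))
      = detF (1 + (c * c' - 1)) * detF (1 + c' * (m - 1) * c') := by
        rw [hfactor, hmul _ hk _ hm']
    _ = detF (c' * (1 + (m - 1)) * Ring.inverse c') := by
        rw [hnil _ hk (hc.mul_sub_one_mul_self hc'), one_mul,
          ringInverse_eq_self_of_mul_self_eq_one hc'c', mul_add, add_mul, mul_one, hc'c']
    _ = detF m := by rw [hconj _ hm _ (isUnit_of_mul_self_eq_one hc'c'), add_sub_cancel]

end TransitionOperators

section FiniteRank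

variable (𝕜 E : Type*) [DivisionRing 𝕜] [TopologicalSpace E] [AddCommGroup E] [Module 𝕜 E]
  [IsTopologicalAddGroup E]

def finiteRankIdeal : TwoSidedIdeal (E →L[𝕜] E) :=
  .mk' {f | (f : E →ₗ[𝕜] E).HasNoetherianRange} (by simp)
    (fun hf hg => by simpa using hf.add hg) (fun hf => by simpa using hf.neg)
    (fun hy => by
      simpa only [Set.mem_ofPred_eq, ContinuousLinearMap.toLinearMap_mul, Module.End.mul_eq_comp]
        using hy.comp_left _)
    (fun hx => by
      simpa only [Set.mem_ofPred_eq, ContinuousLinearMap.toLinearMap_mul, Module.End.mul_eq_comp]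
        using hx.comp_right _)

variable {𝕜 E}

theorem mem_finiteRankIdeal {f : E →L[𝕜] E} :
    f ∈ finiteRankIdeal 𝕜 E ↔ FiniteDimensional 𝕜 (LinearMap.range (f : E →ₗ[𝕜] E)) := by
  rw [finiteRankIdeal, TwoSidedIdeal.mem_mk']
  exact IsNoetherian.iff_fg

end FiniteRank

theorem ContinuousLinearMap.mul_ringInverse_add_mul_eq_zero {R E : Type*} [Semiring R]
    [TopologicalSpace E] [AddCommGroup E] [Module R E] [IsTopologicalAddGroup E]
    {s q : E →L[R] E}
    (hsq : Disjoint (LinearMap.range (s : E →ₗ[R] E)) (LinearMap.range (q : E →ₗ[R] E)))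
    (hu : IsUnit (s + q)) : s * Ring.inverse (s + q) * q = 0 := by
  ext x
  set y := Ring.inverse (s + q) (q x)
  have hy : s y + q y = q x := by
    simpa using congr($(Ring.mul_inverse_cancel _ hu) (q x))
  have hsy : s y ∈ LinearMap.range (q : E →ₗ[R] E) := ⟨x - y, by simp [← hy]⟩
  exact Submodule.disjoint_def.1 hsq _ ⟨y, rfl⟩ hsy

section Projection

variable {𝕜 E : Type*} [RCLike 𝕜] [NormedAddCommGroup E] [InnerProductSpace 𝕜 E]

theorem Submodule.finiteDimensional_inf_orthogonal (U V : Submodule 𝕜 E)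
    [FiniteDimensional 𝕜 (U ⧸ V.comap U.subtype)] : FiniteDimensional 𝕜 ↥(U ⊓ Vᗮ) := by
  refine .of_injective ((V.comap U.subtype).mkQ ∘ₗ Submodule.inclusion inf_le_left) ?_
  rw [← LinearMap.ker_eq_bot, LinearMap.ker_eq_bot']
  intro x hx
  have hxV : (x : E) ∈ V := by simpa [Submodule.Quotient.mk_eq_zero] using hx
  have := Submodule.inf_orthogonal_eq_bot V ▸ Submodule.mem_inf.2 ⟨hxV, x.2.2⟩
  simpa using this

theorem Submodule.starProjection_mul_ringInverse_add_mul_eq_zero {U V : Submodule 𝕜 E}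
    [U.HasOrthogonalProjection] [V.HasOrthogonalProjection] (h : U ⊓ V = ⊥)
    (hu : IsUnit (U.starProjection + V.starProjection)) :
    U.starProjection * Ring.inverse (U.starProjection + V.starProjection) * V.starProjection = 0 :=
  ContinuousLinearMap.mul_ringInverse_add_mul_eq_zero
    (by simpa only [range_starProjection] using disjoint_iff.2 h) hu

theorem Submodule.range_starProjection_sub_le {U V : Submodule 𝕜 E} [U.HasOrthogonalProjection]
    [V.HasOrthogonalProjection] (h : V ≤ U) :
    LinearMap.range ((U.starProjection - V.starProjection : E →L[𝕜] E) : E →ₗ[𝕜] E) ≤ U ⊓ Vᗮ := by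
  rintro _ ⟨x, rfl⟩
  refine ⟨sub_mem (U.starProjection_apply_mem x) (h (V.starProjection_apply_mem x)), ?_⟩
  have e : U.starProjection x - V.starProjection x
      = (x - V.starProjection x) - (x - U.starProjection x) := by abel
  change U.starProjection x - V.starProjection x ∈ Vᗮ
  rw [e]
  exact sub_mem (V.sub_starProjection_mem_orthogonal x)
    (Submodule.orthogonal_le h (U.sub_starProjection_mem_orthogonal x))

theorem Submodule.starProjection_sub_mem_finiteRankIdeal_of_le {U V : Submodule 𝕜 E}
    [U.HasOrthogonalProjection] [V.HasOrthogonalProjection] (h : V ≤ U)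
    [FiniteDimensional 𝕜 (U ⧸ V.comap U.subtype)] :
    U.starProjection - V.starProjection ∈ finiteRankIdeal 𝕜 E := by
  have := U.finiteDimensional_inf_orthogonal V
  exact mem_finiteRankIdeal.2 (Submodule.finiteDimensional_of_le (range_starProjection_sub_le h))

theorem Submodule.starProjection_sub_mem_finiteRankIdeal [CompleteSpace E] (U V : Submodule 𝕜 E)
    [CompleteSpace U] [CompleteSpace V]
    [FiniteDimensional 𝕜 (U ⧸ (U ⊓ V).comap U.subtype)]
    [FiniteDimensional 𝕜 (V ⧸ (U ⊓ V).comap V.subtype)] :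
    U.starProjection - V.starProjection ∈ finiteRankIdeal 𝕜 E := by
  have : CompleteSpace ↥(U ⊓ V) := ((completeSpace_coe_iff_isComplete.1 ‹_›).isClosed.inter
      (completeSpace_coe_iff_isComplete.1 ‹_›).isClosed).completeSpace_coe
  rw [← sub_sub_sub_cancel_right _ _ (U ⊓ V).starProjection]
  exact (finiteRankIdeal 𝕜 E).sub_mem (starProjection_sub_mem_finiteRankIdeal_of_le inf_le_left)
    (starProjection_sub_mem_finiteRankIdeal_of_le inf_le_right)

end Projection

theorem detF_one_add_eq_one_of_mul_self_eq_zero {𝕜 E : Type*} [Field 𝕜] [TopologicalSpace E]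
    [AddCommGroup E] [Module 𝕜 E] [IsTopologicalAddGroup E] (detF : (E →L[𝕜] E) → 𝕜)
    (hdet : ∀ (K : E →L[𝕜] E) (V : Submodule 𝕜 E), FiniteDimensional 𝕜 V →
      (∀ x, K x ∈ V) → ∀ hV : ∀ x ∈ V, K x ∈ V,
      detF (1 + K) = LinearMap.det (LinearMap.id + (K : E →ₗ[𝕜] E).restrict hV))
    {K : E →L[𝕜] E} (hK : FiniteDimensional 𝕜 (LinearMap.range (K : E →ₗ[𝕜] E)))
    (hKK : K * K = 0) : detF (1 + K) = 1 := by
  have hV : ∀ x ∈ LinearMap.range (K : E →ₗ[𝕜] E), K x ∈ LinearMap.range (K : E →ₗ[𝕜] E) :=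
    fun x _ => LinearMap.mem_range_self _ x
  have hres : (K : E →ₗ[𝕜] E).restrict hV = 0 := by
    ext ⟨_, y, rfl⟩
    exact congr($hKK y)
  rw [hdet K _ hK (LinearMap.mem_range_self _) hV, hres, add_zero, LinearMap.det_id]

theorem detF_transition_functions_agree_general
    (detF : (H →L[ℝ] H) → ℝ)
    (hmul : ∀ K K' : H →L[ℝ] H, FiniteDimensional ℝ (LinearMap.range (K : H →ₗ[ℝ] H)) →
      FiniteDimensional ℝ (LinearMap.range (K' : H →ₗ[ℝ] H)) →
      detF ((1 + K) * (1 + K')) = detF (1 + K) * detF (1 + K'))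
    (hconj : ∀ (K S : H →L[ℝ] H), FiniteDimensional ℝ (LinearMap.range (K : H →ₗ[ℝ] H)) → IsUnit S →
      detF (S * (1 + K) * Ring.inverse S) = detF (1 + K))
    (hdet : ∀ (K : H →L[ℝ] H) (V : Submodule ℝ H), FiniteDimensional ℝ V →
      (∀ x, K x ∈ V) → ∀ hV : ∀ x ∈ V, K x ∈ V,
      detF (1 + K) = LinearMap.det (LinearMap.id + (K : H →ₗ[ℝ] H).restrict hV))
    (mu theta theta' : Submodule ℝ H)
    [CompleteSpace mu] [CompleteSpace theta] [CompleteSpace theta']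
    (htrans : theta ⊓ mu = ⊥) (htrans' : theta' ⊓ mu = ⊥)
    (halmost₁ : FiniteDimensional ℝ (theta ⧸ ((theta ⊓ theta').comap theta.subtype)))
    (halmost₂ : FiniteDimensional ℝ (theta' ⧸ ((theta ⊓ theta').comap theta'.subtype)))
    (hadd : IsUnit (projCLM theta + projCLM mu)) (hadd' : IsUnit (projCLM theta' + projCLM mu)) :
    FiniteDimensional ℝ (LinearMap.range
        (((projCLM theta - projCLM mu) * Ring.inverse (projCLM theta' - projCLM mu) - 1 : H →L[ℝ] H) :
          H →ₗ[ℝ] H)) ∧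
      FiniteDimensional ℝ (LinearMap.range
        (((projCLM theta + projCLM mu) * Ring.inverse (projCLM theta' + projCLM mu) - 1 : H →L[ℝ] H) :
          H →ₗ[ℝ] H)) ∧
      detF ((projCLM theta - projCLM mu) * Ring.inverse (projCLM theta' - projCLM mu)) =
        detF ((projCLM theta + projCLM mu) * Ring.inverse (projCLM theta' + projCLM mu)) := by
  have hP : ∀ (U : Submodule ℝ H) [CompleteSpace U], projCLM U = U.starProjection := fun _ _ => rfl
  simp only [hP] at hadd hadd' ⊢
  have hp := mu.isIdempotentElem_starProjection
  have hF := theta.starProjection_sub_mem_finiteRankIdeal theta'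
  have htp := Submodule.starProjection_mul_ringInverse_add_mul_eq_zero htrans hadd
  have ht'p := Submodule.starProjection_mul_ringInverse_add_mul_eq_zero htrans' hadd'
  refine ⟨mem_finiteRankIdeal.1 ?_, mem_finiteRankIdeal.1 ?_,
    detF_sub_mul_ringInverse_eq_detF_add_mul_ringInverse (finiteRankIdeal ℝ H) detF
      (fun K hK K' hK' => hmul K K' (mem_finiteRankIdeal.1 hK) (mem_finiteRankIdeal.1 hK'))
      (fun K hK S hS => hconj K S (mem_finiteRankIdeal.1 hK) hS)
      (fun K hK hKK =>
        detF_one_add_eq_one_of_mul_self_eq_zero detF hdet (mem_finiteRankIdeal.1 hK) hKK)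
      hp hadd hadd' htp ht'p hF⟩
  · exact (finiteRankIdeal ℝ H).mul_ringInverse_sub_one_mem (isUnit_sub_of_isUnit_add hp hadd' ht'p)
      (by rwa [sub_sub_sub_cancel_right])
  · exact (finiteRankIdeal ℝ H).mul_ringInverse_sub_one_mem hadd'
      (by rwa [add_sub_add_right_eq_sub])

/-- Let `μ, θ, θ̃` be closed Lagrangian subspaces with `θ∩μ = θ̃∩μ = {0}` and `θ, θ̃` almost
coinciding.  Then `det_F{(P(θ)−P(μ))(P(θ̃)−P(μ))⁻¹} = det_F{(P(θ)+P(μ))(P(θ̃)+P(μ))⁻¹}`,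
where `P` denotes orthogonal projection, and both operators inside `det_F` differ from `Id`
by finite rank (in particular trace class) operators.  Here `det_F` is any function behaving
like the Fredholm determinant: it is multiplicative on operators `Id + finite rank`,
invariant under conjugation, and agrees with the finite dimensional determinant on invariant
finite dimensional subspaces containing the range. -/
theorem detF_transition_functions_agree
    (J : H →L[ℝ] H) (hJ2 : J ∘L J = -1)
    (hJorth : ∀ x y : H, ⟪J x, J y⟫ = ⟪x, y⟫)
    (detF : (H →L[ℝ] H) → ℝ)
    (hmul : ∀ K K' : H →L[ℝ] H, FiniteDimensional ℝ (LinearMap.range (K : H →ₗ[ℝ] H)) →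
      FiniteDimensional ℝ (LinearMap.range (K' : H →ₗ[ℝ] H)) →
      detF ((1 + K) * (1 + K')) = detF (1 + K) * detF (1 + K'))
    (hconj : ∀ (K S : H →L[ℝ] H), FiniteDimensional ℝ (LinearMap.range (K : H →ₗ[ℝ] H)) → IsUnit S →
      detF (S * (1 + K) * Ring.inverse S) = detF (1 + K))
    (hdet : ∀ (K : H →L[ℝ] H) (V : Submodule ℝ H), FiniteDimensional ℝ V →
      (∀ x, K x ∈ V) → ∀ hV : ∀ x ∈ V, K x ∈ V,
      detF (1 + K) = LinearMap.det (LinearMap.id + (K : H →ₗ[ℝ] H).restrict hV))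
    (mu theta theta' : Submodule ℝ H)
    (hmu : IsLagrangian J mu) (htheta : IsLagrangian J theta) (htheta' : IsLagrangian J theta')
    [CompleteSpace mu] [CompleteSpace theta] [CompleteSpace theta']
    (htrans : theta ⊓ mu = ⊥) (htrans' : theta' ⊓ mu = ⊥)
    (halmost₁ : FiniteDimensional ℝ (theta ⧸ ((theta ⊓ theta').comap theta.subtype)))
    (halmost₂ : FiniteDimensional ℝ (theta' ⧸ ((theta ⊓ theta').comap theta'.subtype)))
    (halmost₃ : Module.finrank ℝ (theta ⧸ ((theta ⊓ theta').comap theta.subtype)) =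
      Module.finrank ℝ (theta' ⧸ ((theta ⊓ theta').comap theta'.subtype)))
    (hsub : IsUnit (projCLM theta - projCLM mu)) (hsub' : IsUnit (projCLM theta' - projCLM mu))
    (hadd : IsUnit (projCLM theta + projCLM mu)) (hadd' : IsUnit (projCLM theta' + projCLM mu)) :
    FiniteDimensional ℝ (LinearMap.range
        (((projCLM theta - projCLM mu) * Ring.inverse (projCLM theta' - projCLM mu) - 1 : H →L[ℝ] H) :
          H →ₗ[ℝ] H)) ∧
      FiniteDimensional ℝ (LinearMap.range
        (((projCLM theta + projCLM mu) * Ring.inverse (projCLM theta' + projCLM mu) - 1 : H →L[ℝ] H) :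
          H →ₗ[ℝ] H)) ∧
      detF ((projCLM theta - projCLM mu) * Ring.inverse (projCLM theta' - projCLM mu)) =
        detF ((projCLM theta + projCLM mu) * Ring.inverse (projCLM theta' + projCLM mu)) :=
  detF_transition_functions_agree_general detF hmul hconj hdet mu theta theta' htrans htrans'
    halmost₁ halmost₂ hadd hadd'
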